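/- Let C be a smooth projective curve of genus g and L a nonspecial line bundle of degree deg L = 2g + p + 1 − c, with c ≥ 1. Then L is (p+1)-very ample if and only if the line bundle 2K_C − L is nonspecial and (c−2)-very ample (for c = 1 the (−1)-very ampleness condition is vacuous, so the condition reads: 2K_C − L is nonspecial). -/
import Mathlib


open CategoryTheory CategoryTheory.Limits
open scoped TensorProduct

noncomputable section

/-!  ## An abstract framework for curves, their symmetric products and syzygies

Mathlib does not yet contain the theory of smooth projective curves, their
Picard groups, cohomology of coherent sheaves, symmetric products and
tautological bundles, or Koszul cohomology.  We therefore record all the data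
and standard facts about these objects (Riemann–Roch, Serre duality, ...) in a
structure `CurveData`, and formulate the statements of the paper for an
arbitrary such datum.  -/

/-- The data attached to a smooth projective curve `C` over `ℂ`:
* its points, and effective divisors (finitely supported functions to `ℕ`);
* its Picard group `Pic` (isomorphism classes of line bundles, written
  additively), the class map from effective divisors, and the degree;
* the genus and canonical class `K`;
* the cohomology spaces `H⁰(C,L)` and `H¹(C,L)` of a line bundle, which are
  finite dimensional complex vector spaces, together with the standard facts:
  Riemann-Roch, Serre duality (on dimensions), vanishing of `H⁰` in negative
  degrees, `h⁰(O_C) = 1`, and the characterization of effective classes;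
* the predicate `Bielliptic` ("`C` admits a degree 2 morphism onto an elliptic
  curve"), recorded as an abstract geometric property of the curve;
* the Koszul cohomology spaces `K_{p,q}(C;B,L)` and Koszul cycle spaces
  `Z_{p,q}(C;B,L)`;
* a genericity predicate `GenericDiv n S` ("`S` contains a dense open subset
  of the symmetric product `C_n`"), the dimension `dimLocus n Z` of a
  constructible locus `Z ⊆ C_n`, and the dimension `dimW r d` of the
  Brill–Noether locus `W^r_d(C)`. -/
structure CurveData where
  Point : Type
  [pointInf : Infinite Point]
  Pic : Type
  [picAdd : AddCommGroup Pic]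
  /-- the class of an effective divisor in the Picard group -/
  divClass : (Point →₀ ℕ) → Pic
  divClass_add : ∀ D E : Point →₀ ℕ, divClass (D + E) = divClass D + divClass E
  genus : ℕ
  degree : Pic → ℤ
  degree_add : ∀ L M : Pic, degree (L + M) = degree L + degree M
  degree_divClass : ∀ D : Point →₀ ℕ, degree (divClass D) = (D.sum fun _ n => (n : ℤ))
  /-- the canonical class -/
  K : Pic
  degree_K : degree K = 2 * (genus : ℤ) - 2
  /-- the space of global sections of a line bundle -/
  H0 : Pic → Type
  [h0add : ∀ L, AddCommGroup (H0 L)]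
  [h0mod : ∀ L, Module ℂ (H0 L)]
  [h0fin : ∀ L, FiniteDimensional ℂ (H0 L)]
  /-- the first cohomology space of a line bundle -/
  H1 : Pic → Type
  [h1add : ∀ L, AddCommGroup (H1 L)]
  [h1mod : ∀ L, Module ℂ (H1 L)]
  [h1fin : ∀ L, FiniteDimensional ℂ (H1 L)]
  riemannRoch : ∀ L, (Module.finrank ℂ (H0 L) : ℤ) - (Module.finrank ℂ (H1 L) : ℤ)
      = degree L + 1 - (genus : ℤ)
  serreDuality : ∀ L, Module.finrank ℂ (H1 L) = Module.finrank ℂ (H0 (K - L))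
  h0_of_neg : ∀ L, degree L < 0 → Module.finrank ℂ (H0 L) = 0
  h0_trivial : Module.finrank ℂ (H0 (0 : Pic)) = 1
  effective_iff : ∀ L, 0 < Module.finrank ℂ (H0 L) ↔ ∃ D : Point →₀ ℕ, divClass D = L
  /-- `C` admits a degree-two morphism onto a smooth curve of genus one. -/
  Bielliptic : Prop
  /-- the Koszul cohomology `K_{p,q}(C; B, L)` of a pair of line bundles:
  the middle cohomology of
  `Λ^{p+1}H⁰(L) ⊗ H⁰(B+(q-1)L) → Λ^p H⁰(L) ⊗ H⁰(B+qL) → Λ^{p-1}H⁰(L) ⊗ H⁰(B+(q+1)L)`. -/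
  Kos : ℕ → ℕ → Pic → Pic → Type
  [kosAdd : ∀ p q B L, AddCommGroup (Kos p q B L)]
  [kosMod : ∀ p q B L, Module ℂ (Kos p q B L)]
  /-- the space of Koszul cycles `Z_{p,q}(C; B, L)`, the kernel of the Koszul
  differential `Λ^p H⁰(L) ⊗ H⁰(B+qL) → Λ^{p-1}H⁰(L) ⊗ H⁰(B+(q+1)L)`. -/
  Zcyc : ℕ → ℕ → Pic → Pic → Type
  [zcycAdd : ∀ p q B L, AddCommGroup (Zcyc p q B L)]
  [zcycMod : ∀ p q B L, Module ℂ (Zcyc p q B L)]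
  /-- `GenericDiv n S` : a general point of `C_n` belongs to `S`, i.e. `S`
  contains a dense open subset of the symmetric product `C_n`. -/
  GenericDiv : ℕ → Set (Point →₀ ℕ) → Prop
  /-- the dimension of a constructible subset of `C_n`. -/
  dimLocus : ℕ → Set (Point →₀ ℕ) → ℤ
  /-- the dimension of the Brill–Noether locus `W^r_d(C) ⊆ Pic^d(C)`. -/
  dimW : ℕ → ℤ → ℤ

attribute [instance] CurveData.pointInf CurveData.picAdd CurveData.h0add CurveData.h0mod
  CurveData.h0fin CurveData.h1add CurveData.h1mod CurveData.h1fin CurveData.kosAdd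
  CurveData.kosMod CurveData.zcycAdd CurveData.zcycMod

namespace CurveData

variable (C : CurveData)

/-- The degree of an effective divisor. -/
def degD (D : C.Point →₀ ℕ) : ℕ := D.sum fun _ n => n

/-- `h⁰(C, L)`. -/
def h0 (L : C.Pic) : ℕ := Module.finrank ℂ (C.H0 L)

/-- `h¹(C, L)`. -/
def h1 (L : C.Pic) : ℕ := Module.finrank ℂ (C.H1 L)

/-- `L` is nonspecial, i.e. `h¹(C,L) = 0`. -/
def Nonspecial (L : C.Pic) : Prop := C.h1 L = 0

/-- `L` is `k`-very ample: for every effective divisor `ξ` of degree `k+1` the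
evaluation map `H⁰(C,L) → H⁰(C, L ⊗ O_ξ)` is surjective.  Since the kernel of
the evaluation map is `H⁰(C, L-ξ)` and its target has dimension `deg ξ = k+1`,
surjectivity says exactly `h⁰(L) = h⁰(L-ξ) + (k+1)`.  (For `k = -1` this is
vacuous, as every line bundle is `(-1)`-very ample.) -/
def VeryAmple (k : ℤ) (L : C.Pic) : Prop :=
  ∀ D : C.Point →₀ ℕ, (C.degD D : ℤ) = k + 1 →
    (C.h0 L : ℤ) = (C.h0 (L - C.divClass D) : ℤ) + (k + 1)

/-- The Clifford index of `C` is at least `c`. -/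
def CliffordGe (c : ℤ) : Prop :=
  ∀ A : C.Pic, 2 ≤ C.h0 A → 2 ≤ C.h1 A → c ≤ C.degree A - 2 * (C.h0 A : ℤ) + 2

/-- `C` is hyperelliptic: it carries a `g¹₂`, equivalently it admits a degree
two morphism onto `ℙ¹`. -/
def Hyperelliptic : Prop := ∃ A : C.Pic, C.degree A = 2 ∧ 2 ≤ C.h0 A

/-- Vanishing of the Koszul cohomology group `K_{p,q}(C;B,L)`. -/
def KosVanishes (p q : ℕ) (B L : C.Pic) : Prop := Subsingleton (C.Kos p q B L)

/-- Vanishing of the Koszul cycles `Z_{p,q}(C;B,L)`. -/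
def ZcycVanishes (p q : ℕ) (B L : C.Pic) : Prop := Subsingleton (C.Zcyc p q B L)

/-- Property `(N_p)` for a nonspecial line bundle `L` of high degree:
equivalently, `K_{i,1}(C;L,L) = 0` for all `1 ≤ i ≤ p`. -/
def PropertyNp (p : ℕ) (L : C.Pic) : Prop :=
  ∀ i : ℕ, 1 ≤ i → i ≤ p → C.KosVanishes i 1 L L

/-- The Brill–Noether number `ρ(g, r, d) = g - (r+1)(g - d + r)`. -/
def brillNoetherRho (r d : ℤ) : ℤ := (C.genus : ℤ) - (r + 1) * ((C.genus : ℤ) - d + r)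

/-- The pointwise minimum `min(D, E)` of two effective divisors, i.e. the
divisorial intersection `D ∩ E`. -/
def minDiv (D E : C.Point →₀ ℕ) : C.Point →₀ ℕ := Finsupp.zipWith min (Nat.min_self 0) D E

end CurveData

/-- The `n`-th symmetric power `Sym^n V` of a complex vector space, realized as
the quotient of the `n`-th tensor power by the relations identifying a basic
tensor with its permutations. -/
abbrev SymPow (n : ℕ) (V : Type) [AddCommGroup V] [Module ℂ V] : Type :=
  (⨂[ℂ]^n V) ⧸ Submodule.span ℂ
    {x : ⨂[ℂ]^n V | ∃ (σ : Equiv.Perm (Fin n)) (v : Fin n → V),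
      x = PiTensorProduct.tprod ℂ v - PiTensorProduct.tprod ℂ (v ∘ σ)}


namespace CurveData

variable (C : CurveData)

lemma degree_sub' (A B : C.Pic) : C.degree (A - B) = C.degree A - C.degree B := by
  have h := C.degree_add (A - B) B
  rw [sub_add_cancel] at h
  omega

lemma degD_cast (D : C.Point →₀ ℕ) : (C.degD D : ℤ) = C.degree (C.divClass D) := by
  rw [C.degree_divClass]
  simp [CurveData.degD, Finsupp.sum]

lemma rr (Lb : C.Pic) : (C.h0 Lb : ℤ) - (C.h1 Lb : ℤ) = C.degree Lb + 1 - (C.genus : ℤ) :=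
  C.riemannRoch Lb

lemma sd (Lb : C.Pic) : C.h1 Lb = C.h0 (C.K - Lb) := C.serreDuality Lb

lemma effD (D : C.Point →₀ ℕ) : 0 < C.h0 (C.divClass D) :=
  (C.effective_iff _).2 ⟨D, rfl⟩

end CurveData

/-- Let `C` be a smooth projective curve of genus `g` and `L` a nonspecial line
bundle of degree `2g + p + 1 - c`, with `c ≥ 1`.  Then `L` is `(p+1)`-very
ample if and only if the line bundle `2K_C - L` is nonspecial and `(c-2)`-very
ample (for `c = 1` the `(-1)`-very ampleness condition is vacuous). -/
theorem very_ample_iff_residual (C : CurveData) (p c : ℕ) (hc : 1 ≤ c) (L : C.Pic)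
    (hns : C.Nonspecial L)
    (hdeg : C.degree L = 2 * (C.genus : ℤ) + (p : ℤ) + 1 - (c : ℤ)) :
    C.VeryAmple ((p : ℤ) + 1) L ↔
      (C.Nonspecial (2 • C.K - L) ∧ C.VeryAmple ((c : ℤ) - 2) (2 • C.K - L)) := by
  have hns' : C.h1 L = 0 := hns
  have hrrL := C.rr L
  rw [hns', hdeg] at hrrL
  have hdeg2K : C.degree (2 • C.K) = 2 * (2 * (C.genus : ℤ) - 2) := by
    rw [two_nsmul, C.degree_add, C.degree_K]; ring
  have hdegM : C.degree (2 • C.K - L) = 2 * (C.genus : ℤ) + (c : ℤ) - (p : ℤ) - 5 := by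
    rw [C.degree_sub', hdeg2K, hdeg]; ring
  have hKM : C.K - (2 • C.K - L) = L - C.K := by rw [two_nsmul]; abel
  constructor
  · intro hva
    -- Step (a): `2K - L` is nonspecial, i.e. `h⁰(L - K) = 0`.
    have ha : C.h0 (L - C.K) = 0 := by
      by_contra hpos
      obtain ⟨F, hF⟩ := (C.effective_iff _).1 (Nat.pos_of_ne_zero hpos)
      obtain ⟨x⟩ := (inferInstance : Nonempty C.Point)
      have hdegE : C.degD (Finsupp.single x (c - 1)) = c - 1 :=
        Finsupp.sum_single_index rfl
      have hdivD : C.divClass (F + Finsupp.single x (c - 1))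
          = (L - C.K) + C.divClass (Finsupp.single x (c - 1)) := by
        rw [C.divClass_add, hF]
      have hdegFE : C.degD (F + Finsupp.single x (c - 1))
          = C.degD F + C.degD (Finsupp.single x (c - 1)) :=
        Finsupp.sum_add_index' (fun _ => rfl) (fun _ _ _ => rfl)
      have hdegF : (C.degD F : ℤ) = (p : ℤ) + 3 - c := by
        rw [C.degD_cast, hF, C.degree_sub', hdeg, C.degree_K]; ring
      have hdegD : (C.degD (F + Finsupp.single x (c - 1)) : ℤ) = (p : ℤ) + 1 + 1 := by
        rw [hdegFE, hdegE]; omega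
      have hva' := hva (F + Finsupp.single x (c - 1)) hdegD
      have hrr2 := C.rr (L - C.divClass (F + Finsupp.single x (c - 1)))
      have hd2 : C.degree (L - C.divClass (F + Finsupp.single x (c - 1)))
          = 2 * (C.genus : ℤ) - 1 - (c : ℤ) := by
        rw [C.degree_sub', hdeg, ← C.degD_cast]; omega
      rw [hd2] at hrr2
      have hsd := C.sd (L - C.divClass (F + Finsupp.single x (c - 1)))
      have heq : C.K - (L - C.divClass (F + Finsupp.single x (c - 1)))
          = C.divClass (Finsupp.single x (c - 1)) := by
        rw [hdivD]; abel
      rw [heq] at hsd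
      have heff := C.effD (Finsupp.single x (c - 1))
      omega
    have hnsM : C.Nonspecial (2 • C.K - L) := by
      show C.h1 _ = 0
      rw [C.sd, hKM]; exact ha
    refine ⟨hnsM, ?_⟩
    have hns0 : C.h1 (2 • C.K - L) = 0 := hnsM
    have hrrM := C.rr (2 • C.K - L)
    rw [hns0, hdegM] at hrrM
    intro E hE
    have hz : C.h0 (L - C.K + C.divClass E) = 0 := by
      by_contra hpos
      obtain ⟨D, hD⟩ := (C.effective_iff _).1 (Nat.pos_of_ne_zero hpos)
      have hdegD : (C.degD D : ℤ) = (p : ℤ) + 1 + 1 := by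
        rw [C.degD_cast, hD, C.degree_add, C.degree_sub', hdeg, C.degree_K, ← C.degD_cast]
        omega
      have hva' := hva D hdegD
      have hrr2 := C.rr (L - C.divClass D)
      have hd2 : C.degree (L - C.divClass D) = 2 * (C.genus : ℤ) - 1 - (c : ℤ) := by
        rw [C.degree_sub', hdeg, ← C.degD_cast]; omega
      rw [hd2] at hrr2
      have hsd := C.sd (L - C.divClass D)
      have heq : C.K - (L - C.divClass D) = C.divClass E := by rw [hD]; abel
      rw [heq] at hsd
      have heff := C.effD E
      omega
    have hsd2 := C.sd (2 • C.K - L - C.divClass E)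
    have heq2 : C.K - (2 • C.K - L - C.divClass E) = L - C.K + C.divClass E := by
      rw [two_nsmul]; abel
    rw [heq2, hz] at hsd2
    have hrr3 := C.rr (2 • C.K - L - C.divClass E)
    rw [hsd2] at hrr3
    have hd3 : C.degree (2 • C.K - L - C.divClass E)
        = 2 * (C.genus : ℤ) + (c : ℤ) - (p : ℤ) - 5 - ((c : ℤ) - 1) := by
      rw [C.degree_sub', hdegM, ← C.degD_cast]; omega
    rw [hd3] at hrr3
    omega
  · rintro ⟨hnsM, hvaM⟩
    have hns0 : C.h1 (2 • C.K - L) = 0 := hnsM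
    have hrrM := C.rr (2 • C.K - L)
    rw [hns0, hdegM] at hrrM
    intro D hD
    have hz : C.h0 (C.K - (L - C.divClass D)) = 0 := by
      by_contra hpos
      obtain ⟨E, hE⟩ := (C.effective_iff _).1 (Nat.pos_of_ne_zero hpos)
      have hdegE : (C.degD E : ℤ) = (c : ℤ) - 2 + 1 := by
        rw [C.degD_cast, hE,
          show C.K - (L - C.divClass D) = C.K - L + C.divClass D from by abel,
          C.degree_add, C.degree_sub', C.degree_K, hdeg, ← C.degD_cast]
        omega
      have hvaM' := hvaM E hdegE
      have heq : 2 • C.K - L - C.divClass E = C.K - C.divClass D := by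
        rw [hE, two_nsmul]; abel
      rw [heq] at hvaM'
      have hrr2 := C.rr (C.K - C.divClass D)
      have hd2 : C.degree (C.K - C.divClass D) = 2 * (C.genus : ℤ) - 2 - ((p : ℤ) + 2) := by
        rw [C.degree_sub', C.degree_K, ← C.degD_cast]; omega
      rw [hd2] at hrr2
      have hsd2 := C.sd (C.K - C.divClass D)
      rw [show C.K - (C.K - C.divClass D) = C.divClass D from by abel] at hsd2
      have heff := C.effD D
      omega
    have hsd3 := C.sd (L - C.divClass D)
    rw [hz] at hsd3
    have hrr3 := C.rr (L - C.divClass D)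
    rw [hsd3] at hrr3
    have hd3 : C.degree (L - C.divClass D) = 2 * (C.genus : ℤ) - 1 - (c : ℤ) := by
      rw [C.degree_sub', hdeg, ← C.degD_cast]; omega
    rw [hd3] at hrr3
    omega

end
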